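/- Let σ be an ergodic P-preserving transformation of a probability space (Ω, F, P) and let n ∈ ℕ. Then there exists k dividing n and a σⁿ-invariant measurable set Z ⊆ Ω with P(Z) = 1/k such that Ω = ⋃_{ℓ=0}^{k-1} σ^{-ℓ} Z (up to null sets) and σⁿ restricted to Z is ergodic with respect to the normalized measure k·P|_Z. -/

import Mathlib

open MeasureTheory Filter Set Function
open scoped ENNReal

/-!
By ergodicity of `σ`, the number of visits of a point to a `σⁿ`-invariant set `A` during `n` steps
is a.e. constant, so `n * P A` is an integer. Hence there is a `σⁿ`-invariant set `A` of minimal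
positive measure. It is an atom of the `σⁿ`-invariant sets, hence `σⁿ` is ergodic on `A`; the
preimages `σ^[ℓ]⁻¹' A` are atoms too, and two atoms are a.e. equal or a.e. disjoint. If `k` is the least period of
`A` modulo null sets, then `A, σ⁻¹' A, …, σ^[k-1]⁻¹' A` are a.e. disjoint and their union is
a.e. `σ`-invariant, hence of full measure: `P A = 1 / k`, and integrality of `n * P A` gives
`k ∣ n`.
-/

section

variable {α : Type*} [MeasurableSpace α] {μ : Measure α} {f g : α → α} {A B : Set α}

theorem Ergodic.exists_nat_mul_measure_eq [IsProbabilityMeasure μ] (hf : Ergodic f μ) {n : ℕ}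
    (hA : MeasurableSet A) (hinv : f^[n] ⁻¹' A =ᵐ[μ] A) : ∃ m : ℕ, (n : ℝ≥0∞) * μ A = m := by
  classical
  let visits : α → ℕ := fun x => ∑ j ∈ Finset.range n, A.indicator 1 (f^[j] x)
  have hvisit_meas (j : ℕ) : Measurable fun x => A.indicator (1 : α → ℕ) (f^[j] x) :=
    (measurable_one.indicator hA).comp (hf.measurable.iterate j)
  have hvisits : visits ∘ f =ᵐ[μ] visits := by
    filter_upwards [eventuallyEq_set.mp hinv] with x hx
    have hshift := Finset.sum_range_succ' (fun j => A.indicator (1 : α → ℕ) (f^[j] x)) n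
    rw [Finset.sum_range_succ] at hshift
    simp only [iterate_succ_apply, iterate_zero_apply] at hshift
    have hend : A.indicator (1 : α → ℕ) (f^[n] x) = A.indicator 1 x := by
      simp only [Set.indicator_apply, mem_preimage] at hx ⊢
      exact if_congr hx rfl rfl
    simp only [comp_apply, visits]
    omega
  obtain ⟨c, hc⟩ := hf.ae_eq_const_of_ae_eq_comp₀ (Finset.measurable_sum _ fun j _ =>
    hvisit_meas j).nullMeasurable hvisits
  have hcast (y : α) : ((A.indicator 1 y : ℕ) : ℝ≥0∞) = A.indicator 1 y := by
    by_cases hy : y ∈ A <;> simp [hy]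
  refine ⟨c, ?_⟩
  calc (n : ℝ≥0∞) * μ A = ∫⁻ x, (visits x : ℝ≥0∞) ∂μ := by
        simp only [visits, Nat.cast_sum, hcast]
        have hmeas (j : ℕ) : Measurable fun x => A.indicator (1 : α → ℝ≥0∞) (f^[j] x) :=
          (measurable_one.indicator hA).comp (hf.measurable.iterate j)
        rw [lintegral_finsetSum _ fun j _ => hmeas j]
        simp [(hf.iterate _).lintegral_comp (measurable_one.indicator hA),
          lintegral_indicator_one hA]
    _ = c := by
        have hc' : (fun x => (visits x : ℝ≥0∞)) =ᵐ[μ] fun _ => (c : ℝ≥0∞) :=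
          hc.mono fun x hx => congrArg Nat.cast hx
        simp [lintegral_congr_ae hc']

structure IsMinimalInvariantSet (g : α → α) (μ : Measure α) (A : Set α) : Prop where
  measurableSet : MeasurableSet A
  preimage_ae_eq : g ⁻¹' A =ᵐ[μ] A
  pos : 0 < μ A
  le_measure : ∀ B, MeasurableSet B → g ⁻¹' B =ᵐ[μ] B → 0 < μ B → μ A ≤ μ B

namespace IsMinimalInvariantSet

theorem measure_inter_eq_zero_or_measure_diff_eq_zero [IsFiniteMeasure μ]
    (hA : IsMinimalInvariantSet g μ A) (hB : MeasurableSet B) (hBinv : g ⁻¹' B =ᵐ[μ] B) :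
    μ (A ∩ B) = 0 ∨ μ (A \ B) = 0 := by
  refine or_iff_not_imp_left.2 fun hAB => ?_
  have hle : μ A ≤ μ (A ∩ B) := hA.le_measure _ (hA.measurableSet.inter hB)
    (by rw [preimage_inter]; exact ae_eq_set_inter hA.preimage_ae_eq hBinv) (pos_iff_ne_zero.2 hAB)
  rw [← sdiff_self_inter, measure_sdiff inter_subset_left
    (hA.measurableSet.inter hB).nullMeasurableSet (measure_ne_top μ _)]
  exact tsub_eq_zero_of_le hle

theorem ae_eq_or_aedisjoint [IsFiniteMeasure μ] (hA : IsMinimalInvariantSet g μ A)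
    (hB : IsMinimalInvariantSet g μ B) : A =ᵐ[μ] B ∨ AEDisjoint μ A B := by
  rcases hA.measure_inter_eq_zero_or_measure_diff_eq_zero hB.measurableSet hB.preimage_ae_eq
    with h | hAB
  · exact .inr h
  rcases hB.measure_inter_eq_zero_or_measure_diff_eq_zero hA.measurableSet hA.preimage_ae_eq
    with h | hBA
  · exact .inr (by rwa [AEDisjoint, inter_comm])
  · exact .inl (ae_eq_set.2 ⟨hAB, hBA⟩)

theorem preimage (hA : IsMinimalInvariantSet g μ A) (hf : MeasurePreserving f μ μ)
    (hfg : Function.Commute f g) : IsMinimalInvariantSet g μ (f ⁻¹' A) where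
  measurableSet := hf.measurable hA.measurableSet
  preimage_ae_eq := by
    rw [← preimage_comp, hfg.comp_eq, preimage_comp]
    exact hf.quasiMeasurePreserving.preimage_ae_eq hA.preimage_ae_eq
  pos := by rw [hf.measure_preimage hA.measurableSet.nullMeasurableSet]; exact hA.pos
  le_measure := by
    rw [hf.measure_preimage hA.measurableSet.nullMeasurableSet]; exact hA.le_measure

theorem ergodic_restrict [IsFiniteMeasure μ] (hA : IsMinimalInvariantSet g μ A)
    (hg : MeasurePreserving g μ μ) : Ergodic g (μ.restrict A) where
  toMeasurePreserving := by
    simpa only [Measure.restrict_congr_set hA.preimage_ae_eq] using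
      hg.restrict_preimage hA.measurableSet
  aeconst_set s hs hgs := by
    refine eventuallyConst_set'.2 ?_
    rcases hA.measure_inter_eq_zero_or_measure_diff_eq_zero hs (.of_eq hgs) with h | h
    · exact .inl (ae_eq_empty.2 (by rw [Measure.restrict_apply hs, inter_comm, h]))
    · exact .inr (ae_eq_univ.2 <| by
        rw [Measure.restrict_apply hs.compl, ← sdiff_eq_compl_inter, h])

theorem pairwise_aedisjoint_preimage_iterate [IsFiniteMeasure μ] {n k : ℕ}
    (hA : IsMinimalInvariantSet (f^[n]) μ A) (hf : MeasurePreserving f μ μ)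
    (hk : ∀ j, 0 < j → j < k → ¬ f^[j] ⁻¹' A =ᵐ[μ] A) :
    (Finset.range k : Set ℕ).Pairwise (AEDisjoint μ on fun ℓ => f^[ℓ] ⁻¹' A) := by
  intro i hi j hj hij
  wlog hlt : i < j generalizing i j
  · exact (this hj hi hij.symm (hij.lt_or_gt.resolve_left hlt)).symm
  simp only [Finset.coe_range, mem_Iio] at hj
  have hB := hA.preimage (hf.iterate (j - i)) (.iterate_iterate_self f _ _)
  have hAB : AEDisjoint μ A (f^[j - i] ⁻¹' A) :=
    (hA.ae_eq_or_aedisjoint hB).resolve_left fun h => hk (j - i) (by omega) (by omega) h.symm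
  have hj : f^[j] ⁻¹' A = f^[i] ⁻¹' (f^[j - i] ⁻¹' A) := by
    rw [← preimage_comp, ← iterate_add, Nat.sub_add_cancel hlt.le]
  change AEDisjoint μ (f^[i] ⁻¹' A) (f^[j] ⁻¹' A)
  rw [hj, AEDisjoint, ← preimage_inter,
    (hf.iterate i).measure_preimage (hA.measurableSet.inter hB.measurableSet).nullMeasurableSet]
  exact hAB

end IsMinimalInvariantSet

theorem Ergodic.exists_isMinimalInvariantSet_iterate [IsProbabilityMeasure μ] (hf : Ergodic f μ)
    {n : ℕ} (hn : 0 < n) : ∃ A, IsMinimalInvariantSet (f^[n]) μ A := by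
  classical
  have hex : ∃ m : ℕ, ∃ A, MeasurableSet A ∧ f^[n] ⁻¹' A =ᵐ[μ] A ∧ 0 < μ A ∧
      (n : ℝ≥0∞) * μ A = m := ⟨n, univ, .univ, by simp, by simp, by simp⟩
  obtain ⟨A, hA, hinv, hpos, hval⟩ := Nat.find_spec hex
  refine ⟨A, hA, hinv, hpos, fun B hB hBinv hBpos => ?_⟩
  obtain ⟨m, hm⟩ := hf.exists_nat_mul_measure_eq hB hBinv
  have hle : (n : ℝ≥0∞) * μ A ≤ n * μ B := by
    rw [hval, hm]
    exact_mod_cast Nat.find_min' hex ⟨B, hB, hBinv, hBpos, hm⟩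
  exact (ENNReal.mul_le_mul_iff_right (by simp [hn.ne']) (by simp)).mp hle

theorem Ergodic.measure_compl_biUnion_preimage_iterate_eq_zero [IsFiniteMeasure μ]
    (hf : Ergodic f μ) (hA : MeasurableSet A) (hA0 : μ A ≠ 0) {k : ℕ} (hk : 0 < k)
    (hkA : f^[k] ⁻¹' A =ᵐ[μ] A) : μ (⋃ ℓ ∈ Finset.range k, f^[ℓ] ⁻¹' A)ᶜ = 0 := by
  set U := ⋃ ℓ ∈ Finset.range k, f^[ℓ] ⁻¹' A
  have hU : MeasurableSet U :=
    Finset.measurableSet_biUnion _ fun ℓ _ => hf.measurable.iterate ℓ hA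
  have hAU : A ⊆ U := fun x hx => mem_biUnion (Finset.mem_range.2 hk) hx
  -- `f⁻¹' U` is `U` with `A` replaced by `f^[k]⁻¹' A`: it only adds the null set `f^[k]⁻¹' A \ A`.
  have hfU : f ⁻¹' U ≤ᵐ[μ] U := by
    refine ae_le_set.2 (measure_mono_null ?_ (ae_eq_set.1 hkA).1)
    rintro x ⟨hxU, hxnU⟩
    simp only [U, mem_preimage, mem_iUnion, Finset.mem_range, ← iterate_succ_apply] at hxU
    obtain ⟨ℓ, hℓ, hxA⟩ := hxU
    obtain rfl : ℓ + 1 = k := by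
      by_contra hne
      exact hxnU (mem_biUnion (Finset.mem_range.2 (by omega)) hxA)
    exact ⟨hxA, fun hx => hxnU (hAU hx)⟩
  rcases hf.ae_empty_or_univ_of_preimage_ae_le hU.nullMeasurableSet hfU with h | h
  · exact absurd (measure_mono_null hAU (ae_eq_empty.1 h)) hA0
  · exact ae_eq_univ.1 h

theorem MeasureTheory.MeasurePreserving.measure_biUnion_preimage_iterate
    (hf : MeasurePreserving f μ μ) (hA : MeasurableSet A) {k : ℕ}
    (hd : (Finset.range k : Set ℕ).Pairwise (AEDisjoint μ on fun ℓ => f^[ℓ] ⁻¹' A)) :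
    μ (⋃ ℓ ∈ Finset.range k, f^[ℓ] ⁻¹' A) = k * μ A := by
  rw [measure_biUnion_finset₀ hd fun ℓ _ => (hf.measurable.iterate ℓ hA).nullMeasurableSet]
  simp [(hf.iterate _).measure_preimage hA.nullMeasurableSet]

end

theorem stmt2_general {Ω : Type*} [MeasurableSpace Ω] (P : Measure Ω) [IsProbabilityMeasure P]
    (σ : Ω → Ω) (hσ : Ergodic σ P) (n : ℕ) (hn : 0 < n) :
    ∃ k : ℕ, k ∣ n ∧ ∃ Z : Set Ω, MeasurableSet Z ∧ P Z = 1 / k ∧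
      ((σ^[n]) ⁻¹' Z : Set Ω) =ᵐ[P] Z ∧
      P ((⋃ ℓ ∈ Finset.range k, (σ^[ℓ]) ⁻¹' Z)ᶜ) = 0 ∧
      Ergodic (σ^[n]) ((k : ENNReal) • P.restrict Z) := by
  classical
  obtain ⟨A, hA⟩ := hσ.exists_isMinimalInvariantSet_iterate hn
  have hper : ∃ j, 0 < j ∧ σ^[j] ⁻¹' A =ᵐ[P] A := ⟨n, hn, hA.preimage_ae_eq⟩
  set k := Nat.find hper
  obtain ⟨hk, hkA⟩ : 0 < k ∧ σ^[k] ⁻¹' A =ᵐ[P] A := Nat.find_spec hper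
  have hdisj := hA.pairwise_aedisjoint_preimage_iterate hσ.toMeasurePreserving
    fun j hj hjk hjA => Nat.find_min hper hjk ⟨hj, hjA⟩
  have hcover := hσ.measure_compl_biUnion_preimage_iterate_eq_zero hA.measurableSet hA.pos.ne'
    hk hkA
  have hkPA : (k : ℝ≥0∞) * P A = 1 := by
    rw [← hσ.toMeasurePreserving.measure_biUnion_preimage_iterate hA.measurableSet hdisj]
    exact (prob_compl_eq_zero_iff (Finset.measurableSet_biUnion _ fun ℓ _ =>
      hσ.measurable.iterate ℓ hA.measurableSet)).1 hcover
  have hPA : P A = 1 / k := by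
    rw [ENNReal.eq_div_iff (by simp [hk.ne']) (by simp), hkPA]
  have hdvd : k ∣ n := by
    obtain ⟨m, hm⟩ := hσ.exists_nat_mul_measure_eq hA.measurableSet hA.preimage_ae_eq
    rw [hPA, mul_one_div, eq_comm, ENNReal.eq_div_iff (by simp [hk.ne']) (by simp)] at hm
    exact ⟨m, by exact_mod_cast hm.symm⟩
  exact ⟨k, hdvd, A, hA.measurableSet, hPA, hA.preimage_ae_eq, hcover,
    (hA.ergodic_restrict (hσ.toMeasurePreserving.iterate n)).smul_measure _⟩

theorem stmt2 {Ω : Type*} [MeasurableSpace Ω] (P : Measure Ω) [IsProbabilityMeasure P]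
    (σ : Ω → Ω) (hσ : Ergodic σ P) (hbij : Function.Bijective σ) (n : ℕ) (hn : 0 < n) :
    ∃ k : ℕ, k ∣ n ∧ ∃ Z : Set Ω, MeasurableSet Z ∧ P Z = 1 / k ∧
      ((σ^[n]) ⁻¹' Z : Set Ω) =ᵐ[P] Z ∧
      P ((⋃ ℓ ∈ Finset.range k, (σ^[ℓ]) ⁻¹' Z)ᶜ) = 0 ∧
      Ergodic (σ^[n]) ((k : ENNReal) • P.restrict Z) :=
  stmt2_general P σ hσ n hn
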